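/- Let h: R^{p+1} -> R be bounded measurable. Let m_h(W) be a version of E[h(X̃) <X, v> | sigma(W)] and m_1(W) a version of E[<X, v> | sigma(W)], both computed under the conditional probability measure P(. | R = 1), and suppose m_1(W) != 0 almost surely under P(. | R = 1). Define the operator T by (Th)(x̃) = h(x̃) - m_h(Gamma^T x̃) / m_1(Gamma^T x̃). Then for every bounded measurable f: R^d -> R, E[R * (Th)(X̃) * f(W) * <X, v>] = 0. Consequently, if a measurable u solves the weighting equation, then so does u + Th for every such h. (The 'plus Th' part of Theorem 2.) -/

import Mathlib

/-! On `{R = 1}`, integrating against `P` is integrating against `P(· ∣ R = 1)` up to the factor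
`P(R = 1)`. There, pulling the `σ(W)`-measurable factors out of the conditional expectations gives
`E[f(W) h(X̃) ⟨X, v⟩] = E[f(W) m_h(W)] = E[f(W) (m_h / m₁)(W) ⟨X, v⟩]`, which is the first claim.
Since `m_h / m₁` may be unbounded, `R 𝒯h f(W) ⟨X, v⟩` need not be integrable, so for `u + 𝒯h` the
weighting equation is checked on the sets `{|m_h / m₁|(W) ≤ n}`, where it reduces to the equations
for `u` and `𝒯h` with `f` truncated, and then passes to the limit `n → ∞`. -/

open MeasureTheory ProbabilityTheory Matrix

/-- `X̃ = (Z, X) ∈ ℝ^{p+1}`, the surrogate stacked on top of the covariates. -/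
noncomputable def tilde {Ω : Type*} {p : ℕ} (Z : Ω → ℝ) (X : Ω → Fin p → ℝ) (ω : Ω) :
    Fin (p + 1) → ℝ := Fin.cons (Z ω) (X ω)

/-- `Γᵀ x` for a `(p+1) × d` matrix `Γ` and `x ∈ ℝ^{p+1}`. -/
noncomputable def matT {n d : ℕ} (Γ : Matrix (Fin n) (Fin d) ℝ) (x : Fin n → ℝ) : Fin d → ℝ :=
  fun j => ∑ i, Γ i j * x i

/-- A measurable `u : ℝ^{p+1} → ℝ` solves the weighting equation if
`E[(R u(X̃) - 1) f(W) ⟨X, v⟩] = 0` for every bounded measurable `f : ℝ^d → ℝ`. -/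
def SolvesWeighting {Ω : Type*} [MeasurableSpace Ω] (P : Measure Ω) {p d : ℕ}
    (X : Ω → Fin p → ℝ) (Z R : Ω → ℝ) (Γ : Matrix (Fin (p + 1)) (Fin d) ℝ) (v : Fin p → ℝ)
    (u : (Fin (p + 1) → ℝ) → ℝ) : Prop :=
  ∀ f : (Fin d → ℝ) → ℝ, Measurable f → (∃ C, ∀ w, |f w| ≤ C) →
    ∫ ω, (R ω * u (tilde Z X ω) - 1) * f (matT Γ (tilde Z X ω)) * (X ω ⬝ᵥ v) ∂P = 0

open MeasureTheory ProbabilityTheory Matrix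

section
variable {α E : Type*} {mα : MeasurableSpace α} {μ : Measure α}
  [NormedAddCommGroup E] [NormedSpace ℝ E]

theorem integral_add_of_integrable_of_integral_eq_zero {f g : α → E} (hg : Integrable g μ)
    (hg0 : ∫ x, g x ∂μ = 0) : ∫ x, f x + g x ∂μ = ∫ x, f x ∂μ := by
  by_cases hf : Integrable f μ
  · rw [integral_add hf hg, hg0, add_zero]
  · refine (integral_undef fun hfg => hf ?_).trans (integral_undef hf).symm
    exact (hfg.sub hg).congr (.of_forall fun x => by simp)

theorem integral_eq_zero_of_forall_setIntegral_eq_zero {f : α → E} {s : ℕ → Set α}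
    (hs : ∀ n, MeasurableSet (s n)) (hmono : Monotone s) (hcover : ⋃ n, s n = Set.univ)
    (h : ∀ n, ∫ x in s n, f x ∂μ = 0) : ∫ x, f x ∂μ = 0 := by
  by_cases hf : Integrable f μ
  · have hlim := tendsto_setIntegral_of_monotone hs hmono (by rw [hcover]; exact hf.integrableOn)
    simp only [h, hcover, Measure.restrict_univ] at hlim
    exact tendsto_nhds_unique hlim tendsto_const_nhds
  · exact integral_undef hf

theorem setIntegral_eq_measureReal_mul_integral_cond [IsFiniteMeasure μ] {s : Set α}
    (f : α → E) : ∫ x in s, f x ∂μ = μ.real s • ∫ x, f x ∂μ[|s] := by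
  rcases eq_or_ne (μ s) 0 with hs | hs
  · simp [Measure.restrict_eq_zero.mpr hs, measureReal_def, hs]
  · rw [ProbabilityTheory.cond, integral_smul_measure, smul_smul, measureReal_def,
      ENNReal.toReal_inv, mul_inv_cancel₀ (ENNReal.toReal_ne_zero.mpr ⟨hs, measure_ne_top _ _⟩),
      one_smul]

end

section
variable {Ω : Type*} {m mΩ : MeasurableSpace Ω} {μ : Measure Ω}

theorem integral_mul_condExp (hm : m ≤ mΩ) [SigmaFinite (μ.trim hm)] {g Y : Ω → ℝ}
    (hg : StronglyMeasurable[m] g) (hgY : Integrable (g * Y) μ) (hY : Integrable Y μ) :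
    ∫ ω, g ω * Y ω ∂μ = ∫ ω, g ω * μ[Y | m] ω ∂μ := by
  rw [← integral_condExp hm]
  exact integral_congr_ae (condExp_mul_of_stronglyMeasurable_left hg hgY hY)

theorem integral_sub_div_condExp_mul_eq_zero (hm : m ≤ mΩ) [SigmaFinite (μ.trim hm)]
    {H Y F a b : Ω → ℝ} (hHY : Integrable (H * Y) μ) (hY : Integrable Y μ)
    (hF : StronglyMeasurable[m] F) (hFbd : ∃ C, ∀ ω, |F ω| ≤ C)
    (ha : StronglyMeasurable[m] a) (hb : StronglyMeasurable[m] b)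
    (ha_eq : a =ᵐ[μ] μ[H * Y | m]) (hb_eq : b =ᵐ[μ] μ[Y | m]) (hb0 : ∀ᵐ ω ∂μ, b ω ≠ 0) :
    ∫ ω, (H ω - a ω / b ω) * (F ω * Y ω) ∂μ = 0 := by
  obtain ⟨C, hC⟩ := hFbd
  have hFHY : Integrable (F * (H * Y)) μ :=
    hHY.bdd_mul (c := C) (hF.mono hm).aestronglyMeasurable (.of_forall hC)
  have hFHY_eq : ∫ ω, F ω * (H * Y) ω ∂μ = ∫ ω, F ω * a ω ∂μ := by
    rw [integral_mul_condExp hm hF hFHY hHY]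
    exact integral_congr_ae (Filter.EventuallyEq.rfl.mul ha_eq.symm)
  set G : Ω → ℝ := fun ω => a ω / b ω * F ω
  have hsplit : ∀ ω, (H ω - a ω / b ω) * (F ω * Y ω) = F ω * (H * Y) ω - G ω * Y ω := by
    intro ω; simp only [G, Pi.mul_apply]; ring
  simp_rw [hsplit]
  by_cases hGY : Integrable (G * Y) μ
  · have hGY_eq : ∫ ω, G ω * Y ω ∂μ = ∫ ω, F ω * a ω ∂μ := by
      rw [integral_mul_condExp hm (g := G) ((ha.div hb).mul hF) hGY hY]
      refine integral_congr_ae ?_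
      filter_upwards [hb_eq, hb0] with ω hbω hbω0
      rw [← hbω]
      simp only [G]
      field_simp
    rw [integral_sub (f := fun ω => F ω * (H * Y) ω) (g := fun ω => G ω * Y ω) hFHY hGY,
      hFHY_eq, hGY_eq, sub_self]
  · exact integral_undef fun h => hGY ((hFHY.sub h).congr (.of_forall fun ω => by simp))
end

section
variable {Ω α : Type*} {mΩ : MeasurableSpace Ω} {mα : MeasurableSpace α} {μ : Measure Ω}

theorem integral_mul_eq_setIntegral_of_zero_or_one {R : Ω → ℝ}
    (hR01 : ∀ ω, R ω = 0 ∨ R ω = 1) (hs : MeasurableSet {ω | R ω = 1}) (G : Ω → ℝ) :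
    ∫ ω, R ω * G ω ∂μ = ∫ ω in {ω | R ω = 1}, G ω ∂μ := by
  rw [← integral_indicator hs]
  congr 1
  funext ω
  rcases hR01 ω with h | h <;> simp [h]

theorem setIntegral_preimage_mul_comp_mul {W : Ω → α} {s : Set α}
    (hs : MeasurableSet (W ⁻¹' s)) (A Y : Ω → ℝ) (f : α → ℝ) :
    ∫ ω in W ⁻¹' s, A ω * f (W ω) * Y ω ∂μ = ∫ ω, A ω * s.indicator f (W ω) * Y ω ∂μ := by
  rw [← integral_indicator hs]
  congr 1
  funext ω
  by_cases hω : W ω ∈ s <;> simp [hω]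

theorem integral_add_mul_comp_mul_eq_zero [IsFiniteMeasure μ] {W : Ω → α} (hW : Measurable W)
    {A B Y : Ω → ℝ} (hB : Measurable B) (hY : Measurable Y) (hYbd : ∃ C, ∀ ω, |Y ω| ≤ C)
    {g : α → ℝ} (hg : Measurable g) (hBg : ∃ C, ∀ ω, |B ω| ≤ C + |g (W ω)|)
    (hA0 : ∀ f : α → ℝ, Measurable f → (∃ C, ∀ w, |f w| ≤ C) →
      ∫ ω, A ω * f (W ω) * Y ω ∂μ = 0)
    (hB0 : ∀ f : α → ℝ, Measurable f → (∃ C, ∀ w, |f w| ≤ C) →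
      ∫ ω, B ω * f (W ω) * Y ω ∂μ = 0)
    {f : α → ℝ} (hf : Measurable f) (hfbd : ∃ C, ∀ w, |f w| ≤ C) :
    ∫ ω, (A ω + B ω) * f (W ω) * Y ω ∂μ = 0 := by
  obtain ⟨CY, hCY⟩ := hYbd
  obtain ⟨CB, hCB⟩ := hBg
  obtain ⟨Cf, hCf⟩ := hfbd
  have hs : ∀ n : ℕ, MeasurableSet {w | |g w| ≤ n} := fun n =>
    measurableSet_le hg.abs measurable_const
  refine integral_eq_zero_of_forall_setIntegral_eq_zero (s := fun n => W ⁻¹' {w | |g w| ≤ n})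
    (fun n => hW (hs n)) (fun k n hkn ω (hω : |g (W ω)| ≤ k) => hω.trans (by exact_mod_cast hkn))
    (Set.eq_univ_of_forall fun ω => Set.mem_iUnion.2 ⟨⌈|g (W ω)|⌉₊, Nat.le_ceil |g (W ω)|⟩)
    fun n => ?_
  have hfn : Measurable ({w | |g w| ≤ n}.indicator f) := hf.indicator (hs n)
  have hfnbd : ∃ C, ∀ w, |{w | |g w| ≤ n}.indicator f w| ≤ C :=
    ⟨Cf, fun w => (norm_indicator_le_norm_self f w).trans (hCf w)⟩
  have hBn : IntegrableOn (fun ω => B ω * f (W ω) * Y ω) (W ⁻¹' {w | |g w| ≤ n}) μ := by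
    refine Integrable.of_bound (by fun_prop) ((CB + n) * Cf * CY)
      (ae_restrict_of_forall_mem (hW (hs n)) fun ω hω => ?_)
    have hBω : |B ω| ≤ CB + n := (hCB ω).trans (by gcongr; exact hω)
    rw [Real.norm_eq_abs, abs_mul, abs_mul]
    have hCB0 : 0 ≤ CB + n := (abs_nonneg _).trans hBω
    have hCf0 : 0 ≤ Cf := (abs_nonneg _).trans (hCf (W ω))
    gcongr
    exacts [hCf _, hCY ω]
  simp_rw [add_mul]
  rw [integral_add_of_integrable_of_integral_eq_zero hBn
      (by rw [setIntegral_preimage_mul_comp_mul (hW (hs n))]; exact hB0 _ hfn hfnbd),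
    setIntegral_preimage_mul_comp_mul (hW (hs n))]
  exact hA0 _ hfn hfnbd

theorem integral_mul_sub_div_mul_comp_mul_eq_zero [IsFiniteMeasure μ] {R : Ω → ℝ}
    (hR01 : ∀ ω, R ω = 0 ∨ R ω = 1) (hs : MeasurableSet {ω | R ω = 1})
    {W : Ω → α} (hW : Measurable W) {H Y : Ω → ℝ} (hH : Measurable H)
    (hHbd : ∃ C, ∀ ω, |H ω| ≤ C) (hY : Measurable Y) (hYbd : ∃ C, ∀ ω, |Y ω| ≤ C)
    {mh m1 : α → ℝ} (hmh : Measurable mh) (hm1 : Measurable m1)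
    (hmh_eq : (fun ω => mh (W ω)) =ᵐ[μ[|{ω | R ω = 1}]]
      (μ[|{ω | R ω = 1}])[fun ω => H ω * Y ω | MeasurableSpace.comap W mα])
    (hm1_eq : (fun ω => m1 (W ω)) =ᵐ[μ[|{ω | R ω = 1}]]
      (μ[|{ω | R ω = 1}])[Y | MeasurableSpace.comap W mα])
    (hm1_ne : ∀ᵐ ω ∂(μ[|{ω | R ω = 1}]), m1 (W ω) ≠ 0)
    {f : α → ℝ} (hf : Measurable f) (hfbd : ∃ C, ∀ w, |f w| ≤ C) :
    ∫ ω, R ω * (H ω - mh (W ω) / m1 (W ω)) * f (W ω) * Y ω ∂μ = 0 := by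
  obtain ⟨CH, hCH⟩ := hHbd
  obtain ⟨CY, hCY⟩ := hYbd
  obtain ⟨Cf, hCf⟩ := hfbd
  have hWσ : Measurable[MeasurableSpace.comap W mα] W := comap_measurable W
  have hHY : ∀ ω, ‖(H * Y) ω‖ ≤ CH * CY := fun ω => by
    rw [Real.norm_eq_abs, Pi.mul_apply, abs_mul]
    exact mul_le_mul (hCH ω) (hCY ω) (abs_nonneg _) ((abs_nonneg _).trans (hCH ω))
  simp_rw [mul_assoc]
  rw [integral_mul_eq_setIntegral_of_zero_or_one hR01 hs,
    setIntegral_eq_measureReal_mul_integral_cond,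
    integral_sub_div_condExp_mul_eq_zero hW.comap_le
      (Integrable.of_bound (by fun_prop) _ (.of_forall hHY))
      (Integrable.of_bound hY.aestronglyMeasurable CY (.of_forall hCY))
      (hf.fun_comp hWσ).stronglyMeasurable ⟨Cf, fun ω => hCf _⟩
      (hmh.fun_comp hWσ).stronglyMeasurable (hm1.fun_comp hWσ).stronglyMeasurable
      hmh_eq hm1_eq hm1_ne, smul_zero]
end

theorem abs_mul_sub_le_of_zero_or_one {r x y C : ℝ} (hr : r = 0 ∨ r = 1) (hx : |x| ≤ C) :
    |r * (x - y)| ≤ C + |y| := by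
  rcases hr with rfl | rfl
  · rw [zero_mul, abs_zero]
    exact add_nonneg ((abs_nonneg x).trans hx) (abs_nonneg y)
  · rw [one_mul]
    exact (abs_sub x y).trans (add_le_add_left hx _)

theorem measurable_tilde {Ω : Type*} [MeasurableSpace Ω] {p : ℕ} {Z : Ω → ℝ}
    {X : Ω → Fin p → ℝ} (hZ : Measurable Z) (hX : Measurable X) : Measurable (tilde Z X) :=
  measurable_pi_iff.2 fun i => Fin.cases (by simpa [tilde] using hZ)
    (fun j => by simpa [tilde] using measurable_pi_iff.1 hX j) i

theorem measurable_matT {n d : ℕ} (Γ : Matrix (Fin n) (Fin d) ℝ) : Measurable (matT Γ) := by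
  unfold matT
  fun_prop

theorem exists_abs_dotProduct_le {Ω ι : Type*} [Fintype ι] {X : Ω → ι → ℝ}
    (hX : ∃ C, ∀ ω i, |X ω i| ≤ C) (v : ι → ℝ) : ∃ C, ∀ ω, |X ω ⬝ᵥ v| ≤ C := by
  obtain ⟨C, hC⟩ := hX
  refine ⟨∑ i, C * |v i|, fun ω => ?_⟩
  calc |X ω ⬝ᵥ v| ≤ ∑ i, |X ω i * v i| := Finset.abs_sum_le_sum_abs _ _
    _ ≤ ∑ i, C * |v i| := Finset.sum_le_sum fun i _ => by
      rw [abs_mul]; exact mul_le_mul_of_nonneg_right (hC ω i) (abs_nonneg _)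

theorem add_Th_solves_weighting_equation_general
    {Ω : Type*} [MeasurableSpace Ω] {P : Measure Ω}
    [IsProbabilityMeasure P] {p d : ℕ}
    (X : Ω → Fin p → ℝ) (Z R : Ω → ℝ)
    (hX : Measurable X) (hZ : Measurable Z) (hR : Measurable R)
    (hXbd : ∃ C, ∀ ω i, |X ω i| ≤ C)
    (hR01 : ∀ ω, R ω = 0 ∨ R ω = 1)
    (Γ : Matrix (Fin (p + 1)) (Fin d) ℝ) (v : Fin p → ℝ)
    (h : (Fin (p + 1) → ℝ) → ℝ) (hhm : Measurable h) (hhbd : ∃ C, ∀ x, |h x| ≤ C)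
    (mh m1 : (Fin d → ℝ) → ℝ) (hmhm : Measurable mh) (hm1m : Measurable m1)
    -- `m_h(W)` is a version of `E[h(X̃) ⟨X, v⟩ ∣ σ(W)]` under `P(· ∣ R = 1)`
    (hmhver : (fun ω => mh (matT Γ (tilde Z X ω))) =ᵐ[P[|{ω | R ω = 1}]]
      (P[|{ω | R ω = 1}])[fun ω => h (tilde Z X ω) * (X ω ⬝ᵥ v) |
        MeasurableSpace.comap (fun ω => matT Γ (tilde Z X ω)) inferInstance])
    -- `m₁(W)` is a version of `E[⟨X, v⟩ ∣ σ(W)]` under `P(· ∣ R = 1)`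
    (hm1ver : (fun ω => m1 (matT Γ (tilde Z X ω))) =ᵐ[P[|{ω | R ω = 1}]]
      (P[|{ω | R ω = 1}])[fun ω => X ω ⬝ᵥ v |
        MeasurableSpace.comap (fun ω => matT Γ (tilde Z X ω)) inferInstance])
    (hm1ne : ∀ᵐ ω ∂(P[|{ω | R ω = 1}]), m1 (matT Γ (tilde Z X ω)) ≠ 0) :
    (∀ f : (Fin d → ℝ) → ℝ, Measurable f → (∃ C, ∀ w, |f w| ≤ C) →
        ∫ ω, R ω * (h (tilde Z X ω) - mh (matT Γ (tilde Z X ω)) / m1 (matT Γ (tilde Z X ω)))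
          * f (matT Γ (tilde Z X ω)) * (X ω ⬝ᵥ v) ∂P = 0) ∧
      ∀ u : (Fin (p + 1) → ℝ) → ℝ, Measurable u →
        SolvesWeighting P X Z R Γ v u →
        SolvesWeighting P X Z R Γ v
          (fun x => u x + (h x - mh (matT Γ x) / m1 (matT Γ x))) := by
  have htilde := measurable_tilde hZ hX
  have hW : Measurable fun ω => matT Γ (tilde Z X ω) := (measurable_matT Γ).comp htilde
  have hY : Measurable fun ω => X ω ⬝ᵥ v := by fun_prop
  have hYbd := exists_abs_dotProduct_le hXbd v
  obtain ⟨Ch, hCh⟩ := hhbd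
  have hTh := fun (f : (Fin d → ℝ) → ℝ) (hf : Measurable f) (hfbd : ∃ C, ∀ w, |f w| ≤ C) =>
    integral_mul_sub_div_mul_comp_mul_eq_zero hR01 (hR (measurableSet_singleton 1)) hW
      (hhm.fun_comp htilde) ⟨Ch, fun ω => hCh _⟩ hY hYbd hmhm hm1m hmhver hm1ver hm1ne hf hfbd
  refine ⟨hTh, fun u _ hu f hf hfbd => ?_⟩
  refine (integral_congr_ae (.of_forall fun ω => ?_)).trans
    (integral_add_mul_comp_mul_eq_zero hW (A := fun ω => R ω * u (tilde Z X ω) - 1)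
      (by fun_prop) hY hYbd (g := fun w => mh w / m1 w) (by fun_prop)
      ⟨Ch, fun ω => abs_mul_sub_le_of_zero_or_one (hR01 ω) (hCh _)⟩ hu hTh hf hfbd)
  ring

/-- **the `+ 𝒯h` part of Theorem 2.** For bounded measurable `h`, with
`(𝒯h)(x̃) = h(x̃) - m_h(Γᵀ x̃) / m₁(Γᵀ x̃)`, where `m_h(W)` is a version of
`E[h(X̃) ⟨X, v⟩ ∣ σ(W)]` and `m₁(W)` a version of `E[⟨X, v⟩ ∣ σ(W)]`, both under
`P(· ∣ R = 1)`, and `m₁(W) ≠ 0` a.s. under `P(· ∣ R = 1)`: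
`E[R (𝒯h)(X̃) f(W) ⟨X, v⟩] = 0` for every bounded measurable `f`; consequently, if `u` solves
the weighting equation, then so does `u + 𝒯h`. -/
theorem add_Th_solves_weighting_equation
    {Ω : Type*} [MeasurableSpace Ω] {P : Measure Ω}
    [IsProbabilityMeasure P] {p d : ℕ}
    (X : Ω → Fin p → ℝ) (Z R : Ω → ℝ)
    (hX : Measurable X) (hZ : Measurable Z) (hR : Measurable R)
    (hXbd : ∃ C, ∀ ω i, |X ω i| ≤ C) (hZbd : ∃ C, ∀ ω, |Z ω| ≤ C)
    (hR01 : ∀ ω, R ω = 0 ∨ R ω = 1)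
    (hρpos : 0 < P {ω | R ω = 1})
    (Γ : Matrix (Fin (p + 1)) (Fin d) ℝ) (v : Fin p → ℝ)
    (h : (Fin (p + 1) → ℝ) → ℝ) (hhm : Measurable h) (hhbd : ∃ C, ∀ x, |h x| ≤ C)
    (mh m1 : (Fin d → ℝ) → ℝ) (hmhm : Measurable mh) (hm1m : Measurable m1)
    -- `m_h(W)` is a version of `E[h(X̃) ⟨X, v⟩ ∣ σ(W)]` under `P(· ∣ R = 1)`
    (hmhver : (fun ω => mh (matT Γ (tilde Z X ω))) =ᵐ[P[|{ω | R ω = 1}]]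
      (P[|{ω | R ω = 1}])[fun ω => h (tilde Z X ω) * (X ω ⬝ᵥ v) |
        MeasurableSpace.comap (fun ω => matT Γ (tilde Z X ω)) inferInstance])
    -- `m₁(W)` is a version of `E[⟨X, v⟩ ∣ σ(W)]` under `P(· ∣ R = 1)`
    (hm1ver : (fun ω => m1 (matT Γ (tilde Z X ω))) =ᵐ[P[|{ω | R ω = 1}]]
      (P[|{ω | R ω = 1}])[fun ω => X ω ⬝ᵥ v |
        MeasurableSpace.comap (fun ω => matT Γ (tilde Z X ω)) inferInstance])
    (hm1ne : ∀ᵐ ω ∂(P[|{ω | R ω = 1}]), m1 (matT Γ (tilde Z X ω)) ≠ 0) :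
    (∀ f : (Fin d → ℝ) → ℝ, Measurable f → (∃ C, ∀ w, |f w| ≤ C) →
        ∫ ω, R ω * (h (tilde Z X ω) - mh (matT Γ (tilde Z X ω)) / m1 (matT Γ (tilde Z X ω)))
          * f (matT Γ (tilde Z X ω)) * (X ω ⬝ᵥ v) ∂P = 0) ∧
      ∀ u : (Fin (p + 1) → ℝ) → ℝ, Measurable u →
        SolvesWeighting P X Z R Γ v u →
        SolvesWeighting P X Z R Γ v
          (fun x => u x + (h x - mh (matT Γ x) / m1 (matT Γ x))) :=
  add_Th_solves_weighting_equation_general X Z R hX hZ hR hXbd hR01 Γ v h hhm hhbd mh m1 hmhm hm1m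
    hmhver hm1ver hm1ne
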